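/- For every m ≥ 1, the independence number α of SR(m,3) (the maximum cardinality of a set of pairwise nonadjacent vertices) is: α = (m+1)(m+2)/6 if m ≡ 1 or 5 (mod 6); α = m(m+3)/6 if m ≡ 3 (mod 6); α = m(m+2)/6 if m ≡ 0 or 4 (mod 6); α = (m² + 2m − 2)/6 if m ≡ 2 (mod 6). (In each case the indicated expression is a natural number.) -/

import Mathlib

open Matrix Polynomial

/-- Vertices of the simplicial rook graph: nonnegative integer vectors of length `m` summing to `n`. -/
abbrev SRVertex (m n : ℕ) : Type := {x : Fin m → ℕ // ∑ i, x i = n}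

instance (m n : ℕ) : Fintype (SRVertex m n) :=
  Fintype.subtype (Finset.Nat.antidiagonalTuple m n) fun _ =>
    Finset.Nat.mem_antidiagonalTuple

/-- The simplicial rook graph `SR(m,n)`. -/
def SR (m n : ℕ) : SimpleGraph (SRVertex m n) where
  Adj x y := (Finset.univ.filter fun i => x.1 i ≠ y.1 i).card = 2
  symm := by
    constructor
    intro x y h
    have : (Finset.univ.filter fun i => y.1 i ≠ x.1 i)
        = (Finset.univ.filter fun i => x.1 i ≠ y.1 i) := by
      apply Finset.filter_congr
      intro i _
      simp [ne_comm]
    rw [this]; exact h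
  loopless := by
    constructor
    intro x h
    simp at h

instance (m n : ℕ) : DecidableRel (SR m n).Adj := fun x y =>
  inferInstanceAs (Decidable ((Finset.univ.filter fun i => x.1 i ≠ y.1 i).card = 2))

/-!
Upper bound. If two vertices agree outside two coordinates, or are at `ℓ¹`-distance at most `2`,
they are equal or adjacent, because two vertices never differ in exactly one coordinate. Hence
in an independent set `S` two vertices share at most one nonzero coordinate, at most one vertex
has a given coordinate `≥ 2`, and at most one vertex has the form `3 eᵢ`. Let every `x ∈ S` put
the weight `6 / #(support x)` on each of its nonzero coordinates. Counting the pairs of nonzero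
coordinates through `v` shows that the weight on `v` is at most `m + 2 + m % 2`, plus `2` if
`3 eᵥ ∈ S`; summing over `v` gives `6 #S ≤ m (m + 2 + m % 2) + 2`.

Lower bound. For coordinate weights `w i = i` in `ZMod N` with `m ≤ N` and `N` odd, a level set
of `x ↦ ∑ i, x i • w i` is independent unless it contains two of the vertices `3 eᵢ`. When
`gcd(N, 6) = 1` these all lie in distinct level sets, and pigeonhole over the `N` level sets
gives `C(m + 2, 3) / N`, which matches the upper bound for `m ≢ 2, 3 (mod 6)` and a suitable
`N ∈ {m, m + 1}`. For
`m ≡ 2, 3 (mod 6)` take `N ≡ 3 (mod 6)` and only the level sets `t ≢ 0 (mod 3)`, which contain no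
`3 eᵢ`; their total size is `C(m + 2, 3)` minus the number of vertices whose weight is `0`
modulo `3`, counted by grouping the coordinates by their residue modulo `3`.
-/

open Finset

namespace SR

variable {m n : ℕ}

section Basic

lemma adj_iff {x y : SRVertex m n} : (SR m n).Adj x y ↔ #{v | x.1 v ≠ y.1 v} = 2 := Iff.rfl

lemma card_vertex : Fintype.card (SRVertex m n) = m.multichoose n := by
  rw [← Fintype.card_congr (Sym.equivNatSumOfFintype (Fin m) n), Sym.card_sym_eq_multichoose,
    Fintype.card_fin]

lemma apply_le (x : SRVertex m n) (v : Fin m) : x.1 v ≤ n := by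
  have := single_le_sum (f := x.1) (fun _ _ => Nat.zero_le _) (mem_univ v)
  rwa [x.2] at this

lemma apply_eq_zero_of_apply_eq {x : SRVertex m n} {i v : Fin m} (hi : x.1 i = n) (hv : v ≠ i) :
    x.1 v = 0 := by
  obtain ⟨x, hx⟩ := x
  dsimp only at hi ⊢
  rw [← add_sum_erase _ _ (mem_univ i), hi, add_eq_left, sum_eq_zero_iff] at hx
  exact hx v (mem_erase.2 ⟨hv, mem_univ v⟩)

lemma sum_eq_sum_of_eqOn_compl {x y : SRVertex m n} {s : Finset (Fin m)}
    (h : ∀ v ∉ s, x.1 v = y.1 v) : ∑ v ∈ s, x.1 v = ∑ v ∈ s, y.1 v := by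
  obtain ⟨x, hx⟩ := x
  obtain ⟨y, hy⟩ := y
  dsimp only at h ⊢
  have hc : ∑ v ∈ sᶜ, x v = ∑ v ∈ sᶜ, y v := sum_congr rfl fun v hv => h v (mem_compl.1 hv)
  rw [← sum_add_sum_compl s, hc] at hx
  rw [← sum_add_sum_compl s] at hy
  omega

lemma eq_or_adj_of_card_le_two {x y : SRVertex m n} (h : #{v | x.1 v ≠ y.1 v} ≤ 2) :
    x = y ∨ (SR m n).Adj x y := by
  interval_cases hD : #{v | x.1 v ≠ y.1 v}
  · left
    ext v
    by_contra hv
    rw [card_eq_zero, filter_eq_empty_iff] at hD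
    exact hD (mem_univ v) hv
  · obtain ⟨i, hi⟩ := card_eq_one.1 hD
    have hmem : ∀ v, x.1 v ≠ y.1 v ↔ v = i := fun v => by
      simpa using congrArg (v ∈ ·) hi
    have hagree : ∀ v ∉ ({i} : Finset (Fin m)), x.1 v = y.1 v := fun v hv => by
      by_contra hne
      exact hv (mem_singleton.2 ((hmem v).1 hne))
    have := sum_eq_sum_of_eqOn_compl hagree
    simp only [sum_singleton] at this
    exact absurd this ((hmem i).2 rfl)
  · exact Or.inr hD

lemma eq_or_adj_of_eqOn_compl_pair {x y : SRVertex m n} (i j : Fin m)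
    (h : ∀ v, v ≠ i → v ≠ j → x.1 v = y.1 v) : x = y ∨ (SR m n).Adj x y := by
  refine eq_or_adj_of_card_le_two ((card_le_card (t := {i, j}) fun v hv => ?_).trans card_le_two)
  by_contra hij
  simp only [mem_insert, mem_singleton, not_or] at hij
  exact (mem_filter.1 hv).2 (h v hij.1 hij.2)

/-- The `ℓ¹`-distance `2n - 2 ∑ v, min (x v) (y v)` bounds the number of coordinates in which
`x` and `y` differ. -/
lemma eq_or_adj_of_le_sum_min {x y : SRVertex m n} (h : n ≤ ∑ v, min (x.1 v) (y.1 v) + 1) :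
    x = y ∨ (SR m n).Adj x y := by
  refine eq_or_adj_of_card_le_two ?_
  obtain ⟨x, hx⟩ := x
  obtain ⟨y, hy⟩ := y
  dsimp only at h ⊢
  set d : Fin m → ℕ := fun v => x v - y v + (y v - x v)
  have hd : ∑ v, d v + 2 * ∑ v, min (x v) (y v) = ∑ v, x v + ∑ v, y v := by
    rw [mul_sum, ← sum_add_distrib, ← sum_add_distrib]
    exact sum_congr rfl fun v _ => by simp only [d]; omega
  have hcard : #{v | x v ≠ y v} ≤ ∑ v, d v := by
    rw [card_filter]
    exact sum_le_sum fun v _ => by simp only [d]; split_ifs <;> omega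
  omega

lemma _root_.SimpleGraph.IsIndepSet.eq_of_eq_or_adj {V : Type*} {G : SimpleGraph V} {s : Set V}
    (hs : G.IsIndepSet s) {x y : V} (hx : x ∈ s) (hy : y ∈ s) (h : x = y ∨ G.Adj x y) : x = y :=
  h.resolve_right fun hadj => hs hx hy (G.ne_of_adj hadj) hadj

end Basic

section Support

def support (x : SRVertex m n) : Finset (Fin m) := {v | x.1 v ≠ 0}

@[simp] lemma mem_support {x : SRVertex m n} {v : Fin m} : v ∈ support x ↔ x.1 v ≠ 0 := by
  simp [support]

lemma card_support_le (x : SRVertex m n) : #(support x) ≤ n := by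
  calc #(support x) = ∑ v ∈ support x, 1 := card_eq_sum_ones _
    _ ≤ ∑ v ∈ support x, x.1 v :=
        sum_le_sum fun v hv => Nat.one_le_iff_ne_zero.2 (mem_support.1 hv)
    _ = n := by rw [support, sum_filter_ne_zero, x.2]

lemma card_support_pos (hn : n ≠ 0) (x : SRVertex m n) : 0 < #(support x) := by
  refine card_pos.2 (nonempty_iff_ne_empty.2 fun h => hn ?_)
  rw [← x.2, ← sum_filter_ne_zero, ← support, h, sum_empty]

lemma exists_apply_eq_zero_of_card_support_le_two {x : SRVertex m n} {v : Fin m}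
    (hv : x.1 v ≠ 0) (h : #(support x) ≤ 2) : ∃ j, ∀ u, u ≠ v → u ≠ j → x.1 u = 0 := by
  have : Nonempty (Fin m) := ⟨v⟩
  have : #((support x).erase v) ≤ 1 := by
    rw [card_erase_of_mem (mem_support.2 hv)]; omega
  obtain ⟨j, hj⟩ := card_le_one_iff_subset_singleton.1 this
  refine ⟨j, fun u huv huj => ?_⟩
  by_contra hu
  exact huj (mem_singleton.1 (hj (mem_erase.2 ⟨huv, mem_support.2 hu⟩)))

lemma apply_eq_zero_of_card_support_eq_one {x : SRVertex m n} {u v : Fin m} (hv : x.1 v ≠ 0)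
    (h : #(support x) = 1) (huv : u ≠ v) : x.1 u = 0 := by
  by_contra hu
  exact huv (card_le_one.1 h.le u (mem_support.2 hu) v (mem_support.2 hv))

lemma sum_comp_card_support (T : Finset (SRVertex m 3)) (f : ℕ → ℕ) :
    ∑ x ∈ T, f #(support x) = f 1 * #{x ∈ T | #(support x) = 1} +
      f 2 * #{x ∈ T | #(support x) = 2} + f 3 * #{x ∈ T | #(support x) = 3} := by
  simp only [card_filter, mul_sum, ← sum_add_distrib]
  refine sum_congr rfl fun x _ => ?_
  have h1 := card_support_pos (by norm_num) x
  have h3 := card_support_le x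
  interval_cases #(support x) <;> simp

end Support

section UpperBound

def throughCount (S : Finset (SRVertex m n)) (v : Fin m) (s : ℕ) : ℕ :=
  #{x ∈ S | x.1 v ≠ 0 ∧ #(support x) = s}

lemma sum_throughCount (S : Finset (SRVertex m n)) (s : ℕ) :
    ∑ v, throughCount S v s = s * #{x ∈ S | #(support x) = s} := by
  simp only [throughCount, card_filter]
  rw [sum_comm, mul_sum]
  refine sum_congr rfl fun x _ => ?_
  by_cases h : #(support x) = s
  · simp only [h, and_true, if_true, mul_one, ← card_filter]
    exact h
  · simp [h]

lemma card_filter_card_support_eq_one_le {S : Finset (SRVertex m n)}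
    (hS : (SR m n).IsIndepSet S) : #{x ∈ S | #(support x) = 1} ≤ 1 := by
  refine card_le_one.2 fun x hx y hy => ?_
  rw [mem_filter] at hx hy
  obtain ⟨i, hi⟩ := card_eq_one.1 hx.2
  obtain ⟨j, hj⟩ := card_eq_one.1 hy.2
  refine hS.eq_of_eq_or_adj hx.1 hy.1 (eq_or_adj_of_eqOn_compl_pair i j fun v hvi hvj => ?_)
  have hvx : v ∉ support x := by simp [hi, hvi]
  have hvy : v ∉ support y := by simp [hj, hvj]
  simp only [mem_support, not_not] at hvx hvy
  rw [hvx, hvy]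

variable {S : Finset (SRVertex m 3)}

/-- Two vertices of `S` through `v` share no other nonzero coordinate. -/
lemma throughCount_two_add_two_mul_throughCount_three_le (hS : (SR m 3).IsIndepSet S)
    (v : Fin m) : throughCount S v 2 + 2 * throughCount S v 3 ≤ m - 1 := by
  set Sv := S.filter fun x => x.1 v ≠ 0
  have hdisj : (Sv : Set (SRVertex m 3)).PairwiseDisjoint fun x => (support x).erase v := by
    intro x hx y hy hne
    refine disjoint_left.2 fun u hux huy => hne ?_
    simp only [coe_filter, Set.mem_ofPred_eq, Sv] at hx hy
    simp only [mem_erase, mem_support] at hux huy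
    refine hS.eq_of_eq_or_adj hx.1 hy.1 (eq_or_adj_of_le_sum_min ?_)
    have := sum_le_sum_of_subset (f := fun w => min (x.1 w) (y.1 w)) (subset_univ {u, v})
    rw [sum_pair hux.1] at this
    omega
  have hsum : ∑ x ∈ Sv, #((support x).erase v) ≤ m - 1 := by
    rw [← card_biUnion hdisj]
    calc #(Sv.biUnion fun x => (support x).erase v) ≤ #(univ.erase v) :=
          card_le_card fun u hu => by
            obtain ⟨x, -, hux⟩ := mem_biUnion.1 hu
            exact mem_erase.2 ⟨(mem_erase.1 hux).1, mem_univ u⟩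
      _ = m - 1 := by rw [card_erase_of_mem (mem_univ v), card_univ, Fintype.card_fin]
  have hcard : ∀ x ∈ Sv, #((support x).erase v) = #(support x) - 1 := fun x hx =>
    card_erase_of_mem (mem_support.2 (mem_filter.1 hx).2)
  rw [sum_congr rfl hcard, sum_comp_card_support (f := fun s => s - 1)] at hsum
  simpa [throughCount, Sv, filter_filter] using hsum

lemma eq_of_min_apply_eq (hS : (SR m 3).IsIndepSet S) {x y : SRVertex m 3} {v : Fin m}
    (hx : x ∈ S) (hy : y ∈ S) (hxv : x.1 v ≠ 0) (hyv : y.1 v ≠ 0) (hx2 : #(support x) ≤ 2)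
    (hy2 : #(support y) ≤ 2) (h : min (x.1 v) 2 = min (y.1 v) 2) : x = y := by
  refine hS.eq_of_eq_or_adj hx hy ?_
  rcases Nat.lt_or_ge (x.1 v) 2 with hxv2 | hxv2
  · obtain ⟨i, hi⟩ := exists_apply_eq_zero_of_card_support_le_two hxv hx2
    obtain ⟨j, hj⟩ := exists_apply_eq_zero_of_card_support_le_two hyv hy2
    refine eq_or_adj_of_eqOn_compl_pair i j fun u hui huj => ?_
    by_cases huv : u = v
    · subst huv; omega
    · rw [hi u huv hui, hj u huv huj]
  · refine eq_or_adj_of_le_sum_min ?_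
    have := single_le_sum (f := fun w => min (x.1 w) (y.1 w)) (fun _ _ => Nat.zero_le _)
      (mem_univ v)
    omega

lemma eq_of_card_support_eq_one (hS : (SR m 3).IsIndepSet S) {x y : SRVertex m 3} {v : Fin m}
    (hx : x ∈ S) (hy : y ∈ S) (hxv : x.1 v ≠ 0) (hyv : y.1 v ≠ 0) (hx1 : #(support x) = 1)
    (hy2 : #(support y) ≤ 2) : x = y := by
  obtain ⟨j, hj⟩ := exists_apply_eq_zero_of_card_support_le_two hyv hy2
  refine hS.eq_of_eq_or_adj hx hy (eq_or_adj_of_eqOn_compl_pair v j fun u huv huj => ?_)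
  rw [hj u huv huj, apply_eq_zero_of_card_support_eq_one hxv hx1 huv]

lemma two_mul_throughCount_one_add_throughCount_two_le (hS : (SR m 3).IsIndepSet S)
    (v : Fin m) : 2 * throughCount S v 1 + throughCount S v 2 ≤ 2 := by
  set L := S.filter fun x => x.1 v ≠ 0 ∧ #(support x) ≤ 2
  have hL : #L = throughCount S v 1 + throughCount S v 2 := by
    have := sum_comp_card_support (S.filter fun x => x.1 v ≠ 0) fun s => if s ≤ 2 then 1 else 0
    simpa [← card_filter, filter_filter, L, throughCount] using this
  have hL2 : #L ≤ 2 := by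
    refine card_le_card_of_injOn (t := {1, 2}) (fun x : SRVertex m 3 => min (x.1 v) 2)
      (fun x hx => ?_) fun x hx y hy hxy => ?_
    · have := (mem_filter.1 hx).2.1
      simp only [coe_insert, coe_singleton, Set.mem_insert_iff, Set.mem_singleton_iff]
      omega
    · simp only [coe_filter, Set.mem_ofPred_eq, L] at hx hy
      exact eq_of_min_apply_eq hS hx.1 hy.1 hx.2.1 hy.2.1 hx.2.2 hy.2.2 hxy
  have hL1 : 0 < throughCount S v 1 → #L ≤ 1 := by
    intro h
    obtain ⟨x, hx⟩ := card_pos.1 h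
    rw [mem_filter] at hx
    refine card_le_one.2 fun y hy z hz => ?_
    rw [mem_filter] at hy hz
    rw [← eq_of_card_support_eq_one hS hx.1 hy.1 hx.2.1 hy.2.1 hx.2.2 hy.2.2,
      eq_of_card_support_eq_one hS hx.1 hz.1 hx.2.1 hz.2.1 hx.2.2 hz.2.2]
  omega

theorem six_mul_card_le (hS : (SR m 3).IsIndepSet S) : 6 * #S ≤ m * (m + 2 + m % 2) + 2 := by
  have hv : ∀ v : Fin m, 6 * throughCount S v 1 + 3 * throughCount S v 2 +
      2 * throughCount S v 3 ≤ m + 2 + m % 2 + 2 * throughCount S v 1 := fun v => by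
    have := throughCount_two_add_two_mul_throughCount_three_le hS v
    have := two_mul_throughCount_one_add_throughCount_two_le hS v
    have := v.isLt
    omega
  have hsum := sum_le_sum fun v (_ : v ∈ univ) => hv v
  simp only [sum_add_distrib, ← mul_sum, sum_throughCount, sum_const, card_univ,
    Fintype.card_fin, smul_eq_mul] at hsum
  have hS1 := card_filter_card_support_eq_one_le hS
  have hcard := sum_comp_card_support S fun _ => 1
  simp only [sum_const, smul_eq_mul, mul_one, one_mul] at hcard
  nlinarith

end UpperBound

section Weight

variable {G : Type*} [AddCommGroup G]

def weight (w : Fin m → G) (x : SRVertex m n) : G := ∑ i, x.1 i • w i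

lemma weight_of_apply_eq (w : Fin m → G) {x : SRVertex m n} {i : Fin m} (hi : x.1 i = n) :
    weight w x = n • w i := by
  rw [weight, sum_eq_single i (fun v _ hv => by rw [apply_eq_zero_of_apply_eq hi hv, zero_smul])
    (fun h => absurd (mem_univ i) h), hi]

lemma weight_add_smul_eq {w : Fin m → G} {x y : SRVertex m n} {i j : Fin m} {r : ℕ} (hij : i ≠ j)
    (hi : x.1 i = y.1 i + r) (hj : y.1 j = x.1 j + r) (h : ∀ v, v ≠ i → v ≠ j → x.1 v = y.1 v) :
    weight w x + r • w j = weight w y + r • w i := by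
  have hv : ∀ v, x.1 v • w v + (if v = j then r else 0) • w v
      = y.1 v • w v + (if v = i then r else 0) • w v := by
    intro v
    by_cases hvi : v = i
    · subst hvi; simp [hij, hi, add_smul]
    by_cases hvj : v = j
    · subst hvj; simp [hvi, hj, add_smul]
    · simp [hvi, hvj, h v hvi hvj]
  have := sum_congr rfl fun v (_ : v ∈ univ) => hv v
  simpa [sum_add_distrib, ite_smul, weight] using this

theorem isIndepSet_weight_eq (w : Fin m → G) (t : G)
    (hw : ∀ r, 0 < r → r < n → Function.Injective fun i => r • w i)
    (ht : ∀ i j, n • w i = t → n • w j = t → i = j) :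
    (SR m n).IsIndepSet {x | weight w x = t} := by
  suffices key : ∀ x y : SRVertex m n, weight w x = t → weight w y = t → ∀ i j, i ≠ j →
      (∀ v, v ≠ i → v ≠ j → x.1 v = y.1 v) → y.1 i < x.1 i → False by
    intro x hx y hy hne hadj
    obtain ⟨i, j, hij, hD⟩ := card_eq_two.1 (adj_iff.1 hadj)
    have hmem : ∀ v, x.1 v ≠ y.1 v ↔ v = i ∨ v = j := fun v => by
      simpa using congrArg (v ∈ ·) hD
    have hagree : ∀ v, v ≠ i → v ≠ j → x.1 v = y.1 v := fun v hvi hvj => by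
      by_contra hne'; rcases (hmem v).1 hne' with h | h <;> contradiction
    rcases lt_or_gt_of_ne ((hmem i).2 (Or.inl rfl)) with hlt | hlt
    · exact key y x hy hx i j hij (fun v hvi hvj => (hagree v hvi hvj).symm) hlt
    · exact key x y hx hy i j hij hagree hlt
  intro x y hx hy i j hij hagree hlt
  obtain ⟨r, hr⟩ := Nat.exists_eq_add_of_lt hlt
  have hsum := sum_eq_sum_of_eqOn_compl (s := {i, j}) fun v hv => by
    simp only [mem_insert, mem_singleton, not_or] at hv
    exact hagree v hv.1 hv.2
  rw [sum_pair hij, sum_pair hij] at hsum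
  have hrw := weight_add_smul_eq (w := w) (r := r + 1) hij (by omega) (by omega) hagree
  rw [hx, hy, add_left_cancel_iff] at hrw
  rcases Nat.lt_or_ge (r + 1) n with hrn | hrn
  · exact hij (hw (r + 1) r.succ_pos hrn hrw.symm)
  · have hxi : x.1 i = n := le_antisymm (apply_le x i) (by omega)
    have hyj : y.1 j = n := le_antisymm (apply_le y j) (by omega)
    exact hij (ht i j (weight_of_apply_eq w hxi ▸ hx) (weight_of_apply_eq w hyj ▸ hy))

theorem exists_isIndepSet_card_eq [DecidableEq G] (w : Fin m → G) {T : Finset G}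
    (hT : T.Nonempty) {α : ℕ} (hw : ∀ r, 0 < r → r < n → Function.Injective fun i => r • w i)
    (hTw : ∀ t ∈ T, ∀ i j, n • w i = t → n • w j = t → i = j)
    (hα : #T * α ≤ #{x : SRVertex m n | weight w x ∈ T}) :
    ∃ S : Finset (SRVertex m n), (SR m n).IsIndepSet S ∧ #S = α := by
  obtain ⟨t, htT, ht⟩ := exists_le_card_fiber_of_mul_le_card_of_maps_to
    (fun x hx => (mem_filter.1 hx).2) hT hα
  obtain ⟨S, hS, rfl⟩ := exists_subset_card_eq ht
  refine ⟨S, (isIndepSet_weight_eq w t hw (hTw t htT)).mono fun x hx => ?_, rfl⟩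
  exact (mem_filter.1 (hS hx)).2

end Weight

section Coprime

lemma smul_natCast_injective {N r : ℕ} (hmN : m ≤ N) (hr : r.Coprime N) :
    Function.Injective fun i : Fin m => r • ((i : ℕ) : ZMod N) := by
  intro i j hij
  simp only [nsmul_eq_mul, ← Nat.cast_mul, ZMod.natCast_eq_natCast_iff] at hij
  have := Nat.ModEq.cancel_left_of_coprime hr.symm hij
  exact Fin.ext (Nat.ModEq.eq_of_lt_of_lt this (by omega) (by omega))

theorem exists_isIndepSet_of_coprime {N α : ℕ} [NeZero N] (hn : 0 < n) (hmN : m ≤ N)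
    (hN : n.factorial.Coprime N) (hα : N * α ≤ m.multichoose n) :
    ∃ S : Finset (SRVertex m n), (SR m n).IsIndepSet S ∧ #S = α := by
  have hcop : ∀ r, 0 < r → r ≤ n → r.Coprime N := fun r hr hrn =>
    hN.coprime_dvd_left (Nat.dvd_factorial hr hrn)
  refine exists_isIndepSet_card_eq (fun i : Fin m => ((i : ℕ) : ZMod N)) univ_nonempty
    (fun r hr hrn => smul_natCast_injective hmN (hcop r hr hrn.le)) ?_ ?_
  · intro t _ i j hi hj
    exact smul_natCast_injective hmN (hcop n hn le_rfl) (hi.trans hj.symm)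
  · simpa [ZMod.card, card_vertex] using hα

end Coprime

section ResidueCount

variable {ι : Type*} [DecidableEq ι] (ρ : ι → ZMod 3)

def weightCount (s : Finset ι) (n : ℕ) (c : ZMod 3) : ℕ :=
  #{f ∈ piAntidiag s n | ∑ i ∈ s, f i • ρ i = c}

def fiberCard (s : Finset ι) (a : ZMod 3) : ℕ := #{i ∈ s | ρ i = a}

lemma weightCount_cons {i : ι} {s : Finset ι} (hi : i ∉ s) (n : ℕ) (c : ZMod 3) :
    weightCount ρ (cons i s hi) n c =
      ∑ p ∈ antidiagonal n, weightCount ρ s p.2 (c - p.1 • ρ i) := by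
  rw [weightCount, piAntidiag_cons, filter_disjiUnion, card_disjiUnion]
  refine sum_congr rfl fun p _ => ?_
  rw [filter_map, card_map, weightCount]
  congr 1
  refine filter_congr fun f hf => ?_
  have hfi : f i = 0 := by
    by_contra h
    exact hi ((mem_piAntidiag.1 hf).2 i h)
  have hs : ∀ j ∈ s, (f + fun t => if t = i then p.1 else 0) j • ρ j = f j • ρ j := by
    intro j hj
    simp [show j ≠ i from fun h => hi (h ▸ hj)]
  simp only [Function.comp_apply, addRightEmbedding_apply, sum_cons, sum_congr rfl hs]
  simp [hfi, eq_sub_iff_add_eq, add_comm]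

lemma weightCount_zero (s : Finset ι) (c : ZMod 3) :
    weightCount ρ s 0 c = if c = 0 then 1 else 0 := by
  rw [weightCount, piAntidiag_zero, filter_singleton]
  split_ifs <;> simp_all [eq_comm]

lemma weightCount_empty (n : ℕ) (c : ZMod 3) : weightCount ρ ∅ (n + 1) c = 0 := by
  simp [weightCount]

lemma fiberCard_cons {i : ι} {s : Finset ι} (hi : i ∉ s) (a : ZMod 3) :
    fiberCard ρ (cons i s hi) a = fiberCard ρ s a + if ρ i = a then 1 else 0 := by
  simp only [fiberCard, filter_cons]
  split_ifs <;> simp [card_insert_of_notMem, hi, add_comm]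

lemma _root_.ZMod.three_cases : ∀ c : ZMod 3, c = 0 ∨ c = 1 ∨ c = 2 := by decide

/-- A multiset of `n` residues modulo `3` with sum `c` is, for `n = 2`, either `{2c, 2c}` or
`{2c + 1, 2c + 2}`, and for `n = 3, c = 0`, either `{a, a, a}` or `{0, 1, 2}`. -/
lemma weightCount_one_two_three (s : Finset ι) :
    (∀ c, weightCount ρ s 1 c = fiberCard ρ s c) ∧
    (∀ c, weightCount ρ s 2 c = (fiberCard ρ s (2 * c)).multichoose 2 +
      fiberCard ρ s (2 * c + 1) * fiberCard ρ s (2 * c + 2)) ∧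
    weightCount ρ s 3 0 = (fiberCard ρ s 0).multichoose 3 + (fiberCard ρ s 1).multichoose 3 +
      (fiberCard ρ s 2).multichoose 3 + fiberCard ρ s 0 * fiberCard ρ s 1 * fiberCard ρ s 2 := by
  induction s using Finset.cons_induction with
  | empty => simp [weightCount_empty, fiberCard]
  | cons i s hi ih =>
    obtain ⟨h1, h2, h3⟩ := ih
    simp only [weightCount_cons, Nat.sum_antidiagonal_succ, Nat.antidiagonal_zero, sum_singleton,
      weightCount_zero, fiberCard_cons]
    generalize ρ i = u
    refine ⟨fun c => ?_, fun c => ?_, ?_⟩ <;> rcases ZMod.three_cases u with rfl | rfl | rfl <;>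
      (try rcases ZMod.three_cases c with rfl | rfl | rfl) <;>
      simp only [zero_smul, nsmul_eq_mul, mul_zero, mul_one, sub_zero] <;>
      reduce_mod_char <;> simp [h1, h2, h3, Nat.multichoose_succ_succ] <;> reduce_mod_char <;>
      simp +decide <;> ring

end ResidueCount

section ThreeDvd

lemma card_filter_eq_card_filter_piAntidiag (P : (Fin m → ℕ) → Prop) [DecidablePred P] :
    #{x : SRVertex m n | P x.1} = #{f ∈ piAntidiag univ n | P f} := by
  refine card_bij (fun x _ => x.1) (fun x hx => ?_) (fun x _ y _ h => Subtype.ext h) fun f hf => ?_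
  · simp only [mem_filter, mem_univ, true_and] at hx
    simp [hx, x.2]
  · simp only [mem_filter, mem_piAntidiag] at hf
    exact ⟨⟨f, hf.1.1⟩, by simpa using hf.2, rfl⟩

lemma card_range_filter_natCast_eq {b r : ℕ} (hr : 0 < r) (v : ℕ) :
    #{j ∈ range b | ((j : ℕ) : ZMod r) = v} = b / r + if v % r < b % r then 1 else 0 := by
  simp_rw [ZMod.natCast_eq_natCast_iff]
  rw [← Nat.count_eq_card_filter_range, Nat.count_modEq_card b hr v]

lemma fiberCard_natCast (a : ZMod 3) :
    fiberCard (fun i : Fin m => ((i : ℕ) : ZMod 3)) univ a =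
      m / 3 + if a.val < m % 3 then 1 else 0 := by
  have h : fiberCard (fun i : Fin m => ((i : ℕ) : ZMod 3)) univ a =
      #{j ∈ range m | ((j : ℕ) : ZMod 3) = (a.val : ℕ)} := by
    rw [ZMod.natCast_zmod_val, fiberCard]
    refine card_bij (fun i _ => i.val) (fun i hi => ?_) (fun i _ j _ h => Fin.ext h) fun j hj => ?_
    · simp only [mem_filter, mem_univ, true_and] at hi
      simp [hi]
    · simp only [mem_filter, mem_range] at hj
      exact ⟨⟨j, hj.1⟩, by simpa using hj.2, rfl⟩
  rw [h, card_range_filter_natCast_eq (by norm_num), Nat.mod_eq_of_lt (ZMod.val_lt a)]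

theorem card_weight_natCast_eq_zero :
    #{x : SRVertex m 3 | weight (fun i : Fin m => ((i : ℕ) : ZMod 3)) x = 0} =
      let R := fun a : ℕ => m / 3 + if a < m % 3 then 1 else 0
      (R 0).multichoose 3 + (R 1).multichoose 3 + (R 2).multichoose 3 + R 0 * R 1 * R 2 := by
  have h := (card_filter_eq_card_filter_piAntidiag fun f => ∑ i, f i • ((i : ℕ) : ZMod 3) = 0).trans
    (weightCount_one_two_three (fun i : Fin m => ((i : ℕ) : ZMod 3)) univ).2.2
  simp only [fiberCard_natCast] at h
  exact h

lemma card_filter_castHom_eq_zero {N : ℕ} [NeZero N] (h3 : 3 ∣ N) :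
    #{t : ZMod N | ZMod.castHom h3 (ZMod 3) t = 0} = N / 3 := by
  have h := card_range_filter_natCast_eq (b := N) (r := 3) (by norm_num) 0
  rw [Nat.zero_mod, Nat.mod_eq_zero_of_dvd h3, if_neg (lt_irrefl 0), add_zero] at h
  rw [← h]
  have hcast : ∀ t : ZMod N, ZMod.castHom h3 (ZMod 3) t = ((t.val : ℕ) : ZMod 3) := fun t => by
    rw [ZMod.castHom_apply, ZMod.cast_eq_val]
  refine card_bij (fun t _ => t.val) (fun t ht => ?_) (fun s _ t _ h => ZMod.val_injective N h)
    fun j hj => ?_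
  · rw [mem_filter, hcast] at ht
    exact mem_filter.2 ⟨mem_range.2 (ZMod.val_lt t), ht.2⟩
  · rw [mem_filter, mem_range] at hj
    refine ⟨(j : ZMod N), ?_, ZMod.val_cast_of_lt hj.1⟩
    rw [mem_filter, hcast, ZMod.val_cast_of_lt hj.1]
    exact ⟨mem_univ _, hj.2⟩

theorem exists_isIndepSet_of_three_dvd {N α : ℕ} [NeZero N] (hmN : m ≤ N) (hN : Odd N)
    (h3 : 3 ∣ N) (hα : (N - N / 3) * α +
      #{x : SRVertex m 3 | weight (fun i : Fin m => ((i : ℕ) : ZMod 3)) x = 0} ≤ m.multichoose 3) :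
    ∃ S : Finset (SRVertex m 3), (SR m 3).IsIndepSet S ∧ #S = α := by
  set π := ZMod.castHom h3 (ZMod 3)
  have hπ : ∀ x : SRVertex m 3, π (weight (fun i : Fin m => ((i : ℕ) : ZMod N)) x) =
      weight (fun i : Fin m => ((i : ℕ) : ZMod 3)) x := fun x => by
    simp [weight, map_sum, map_natCast]
  have hT : #{t : ZMod N | π t ≠ 0} = N - N / 3 := by
    have := card_filter_add_card_filter_not (s := univ) fun t : ZMod N => π t = 0
    rw [card_filter_castHom_eq_zero h3, card_univ, ZMod.card] at this
    simp only [ne_eq]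
    omega
  refine exists_isIndepSet_card_eq (fun i : Fin m => ((i : ℕ) : ZMod N)) (T := {t | π t ≠ 0})
    ⟨1, by simp only [mem_filter, mem_univ, map_one, true_and]; decide⟩
    (fun r hr hr3 => smul_natCast_injective hmN ?_) ?_ ?_
  · exact (Nat.coprime_two_left.2 hN).coprime_dvd_left (by interval_cases r <;> norm_num)
  · intro t ht i _ hi _
    simp only [mem_filter, mem_univ, true_and] at ht
    refine absurd ?_ ht
    rw [← hi, map_nsmul]
    exact (ZMod.natCast_self 3 ▸ (nsmul_eq_mul 3 _)).trans (zero_mul _)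
  · have hc := card_filter_add_card_filter_not (s := univ)
      fun x : SRVertex m 3 => weight (fun i : Fin m => ((i : ℕ) : ZMod 3)) x = 0
    rw [card_univ, card_vertex] at hc
    simp only [mem_filter, mem_univ, true_and, hT, hπ, ne_eq]
    omega

end ThreeDvd

section IndepBound

def indepBound (m : ℕ) : ℕ := (m * (m + 2 + m % 2) + 2) / 6

lemma card_le_indepBound {S : Finset (SRVertex m 3)} (hS : (SR m 3).IsIndepSet S) :
    #S ≤ indepBound m :=
  (Nat.le_div_iff_mul_le (by norm_num)).2 (by linarith [six_mul_card_le hS])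

lemma six_mul_multichoose_three (r : ℕ) : 6 * r.multichoose 3 = r * (r + 1) * (r + 2) := by
  have h2 : ∀ r : ℕ, 2 * r.multichoose 2 = r * (r + 1) := fun r => by
    induction r with
    | zero => simp
    | succ r ih => rw [Nat.multichoose_succ_succ, Nat.multichoose_one_right]; nlinarith
  induction r with
  | zero => simp
  | succ r ih => rw [Nat.multichoose_succ_succ, mul_add, ih]; nlinarith [h2 (r + 1)]

lemma exists_isIndepSet_three_of_coprime {N β : ℕ} (hN : N % 6 = 1 ∨ N % 6 = 5) (hmN : m ≤ N)
    (h : 6 * (N * β) ≤ m * (m + 1) * (m + 2)) :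
    ∃ S : Finset (SRVertex m 3), (SR m 3).IsIndepSet S ∧ #S = β := by
  have : NeZero N := ⟨by omega⟩
  have hcop : (3 : ℕ).factorial.Coprime N := by
    rw [Nat.Coprime, show (3 : ℕ).factorial = 6 from rfl, Nat.gcd_rec]
    rcases hN with hN | hN <;> rw [hN] <;> rfl
  refine exists_isIndepSet_of_coprime (by norm_num) hmN hcop ?_
  have := six_mul_multichoose_three m
  omega

lemma exists_isIndepSet_card_eq_indepBound_of_coprime
    (hm : m % 6 = 0 ∨ m % 6 = 1 ∨ m % 6 = 4 ∨ m % 6 = 5) :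
    ∃ S : Finset (SRVertex m 3), (SR m 3).IsIndepSet S ∧ #S = indepBound m := by
  obtain ⟨k, hk⟩ : ∃ k, m = 6 * k + m % 6 := ⟨m / 6, (Nat.div_add_mod m 6).symm⟩
  rcases hm with hr | hr | hr | hr <;> rw [hr] at hk
  · rw [show indepBound m = k * (6 * k + 2) by
      rw [indepBound, show m % 2 = 0 by omega, hk]; ring_nf; omega]
    exact exists_isIndepSet_three_of_coprime (N := m + 1) (by omega) (by omega)
      (by subst hk; nlinarith)
  · rw [show indepBound m = (3 * k + 1) * (2 * k + 1) by
      rw [indepBound, show m % 2 = 1 by omega, hk]; ring_nf; omega]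
    exact exists_isIndepSet_three_of_coprime (N := m) (by omega) le_rfl (by subst hk; nlinarith)
  · rw [show indepBound m = (3 * k + 2) * (2 * k + 2) by
      rw [indepBound, show m % 2 = 0 by omega, hk]; ring_nf; omega]
    exact exists_isIndepSet_three_of_coprime (N := m + 1) (by omega) (by omega)
      (by subst hk; nlinarith)
  · rw [show indepBound m = (k + 1) * (6 * k + 7) by
      rw [indepBound, show m % 2 = 1 by omega, hk]; ring_nf; omega]
    exact exists_isIndepSet_three_of_coprime (N := m) (by omega) le_rfl (by subst hk; nlinarith)

lemma exists_isIndepSet_card_eq_indepBound_of_three_dvd (hm : m % 6 = 2 ∨ m % 6 = 3) :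
    ∃ S : Finset (SRVertex m 3), (SR m 3).IsIndepSet S ∧ #S = indepBound m := by
  obtain ⟨k, hk⟩ : ∃ k, m = 6 * k + m % 6 := ⟨m / 6, (Nat.div_add_mod m 6).symm⟩
  have hm3 := six_mul_multichoose_three m
  have hk1 := six_mul_multichoose_three (2 * k + 1)
  rcases hm with hr | hr <;> rw [hr] at hk
  · rw [show indepBound m = 6 * k * k + 6 * k + 1 by
      rw [indepBound, show m % 2 = 0 by omega, hk]; ring_nf; omega]
    refine exists_isIndepSet_of_three_dvd (N := m + 1) (by omega) (by rw [Nat.odd_iff]; omega)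
      (by omega) ?_
    rw [card_weight_natCast_eq_zero]
    simp only [show m / 3 = 2 * k by omega, show m % 3 = 2 by omega,
      show m + 1 - (m + 1) / 3 = 4 * k + 2 by omega]
    norm_num
    have := six_mul_multichoose_three (2 * k)
    subst hk; nlinarith
  · have : NeZero m := ⟨by omega⟩
    rw [show indepBound m = 6 * k * k + 9 * k + 3 by
      rw [indepBound, show m % 2 = 1 by omega, hk]; ring_nf; omega]
    refine exists_isIndepSet_of_three_dvd (N := m) le_rfl (by rw [Nat.odd_iff]; omega)
      (by omega) ?_
    rw [card_weight_natCast_eq_zero]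
    simp only [show m / 3 = 2 * k + 1 by omega, show m % 3 = 0 by omega,
      show m - (2 * k + 1) = 4 * k + 2 by omega]
    norm_num
    subst hk; nlinarith

theorem exists_isIndepSet_card_eq_indepBound (m : ℕ) :
    ∃ S : Finset (SRVertex m 3), (SR m 3).IsIndepSet S ∧ #S = indepBound m := by
  by_cases hm : m % 6 = 2 ∨ m % 6 = 3
  · exact exists_isIndepSet_card_eq_indepBound_of_three_dvd hm
  · exact exists_isIndepSet_card_eq_indepBound_of_coprime (by omega)

theorem ite_eq_indepBound (m : ℕ) :
    (if m % 6 = 1 ∨ m % 6 = 5 then (m + 1) * (m + 2) / 6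
      else if m % 6 = 3 then m * (m + 3) / 6
      else if m % 6 = 2 then (m ^ 2 + 2 * m - 2) / 6
      else m * (m + 2) / 6) = indepBound m := by
  obtain ⟨k, hk⟩ : ∃ k, m = 6 * k + m % 6 := ⟨m / 6, (Nat.div_add_mod m 6).symm⟩
  have h6 : m % 6 < 6 := Nat.mod_lt _ (by norm_num)
  rw [indepBound]
  interval_cases hr : m % 6 <;> simp only [show m % 2 = m % 6 % 2 by omega, hr] <;> norm_num <;>
    subst hk <;> ring_nf <;> omega

end IndepBound

end SR

theorem SR_indepNum_n_three_general (m : ℕ) :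
    ∃ α : ℕ,
      (α = if m % 6 = 1 ∨ m % 6 = 5 then (m + 1) * (m + 2) / 6
        else if m % 6 = 3 then m * (m + 3) / 6
        else if m % 6 = 2 then (m ^ 2 + 2 * m - 2) / 6
        else m * (m + 2) / 6) ∧
      (∃ S : Finset (SRVertex m 3),
        (S : Set (SRVertex m 3)).Pairwise (fun a b => ¬ (SR m 3).Adj a b) ∧
        S.card = α) ∧
      (∀ S : Finset (SRVertex m 3),
        (S : Set (SRVertex m 3)).Pairwise (fun a b => ¬ (SR m 3).Adj a b) →
        S.card ≤ α) := by
  exact ⟨SR.indepBound m, (SR.ite_eq_indepBound m).symm, SR.exists_isIndepSet_card_eq_indepBound m,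
    fun S hS => SR.card_le_indepBound hS⟩

/-- The independence number of `SR(m,3)`, for `m ≥ 1`, depending on `m mod 6`. -/
theorem SR_indepNum_n_three (m : ℕ) (hm : 1 ≤ m) :
    ∃ α : ℕ,
      (α = if m % 6 = 1 ∨ m % 6 = 5 then (m + 1) * (m + 2) / 6
        else if m % 6 = 3 then m * (m + 3) / 6
        else if m % 6 = 2 then (m ^ 2 + 2 * m - 2) / 6
        else m * (m + 2) / 6) ∧
      (∃ S : Finset (SRVertex m 3),
        (S : Set (SRVertex m 3)).Pairwise (fun a b => ¬ (SR m 3).Adj a b) ∧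
        S.card = α) ∧
      (∀ S : Finset (SRVertex m 3),
        (S : Set (SRVertex m 3)).Pairwise (fun a b => ¬ (SR m 3).Adj a b) →
        S.card ≤ α) :=
  SR_indepNum_n_three_general m
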